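/- arXiv:2009.02120 — 2 statements merged into one kernel-verified Lean document; each statement's English description precedes it below -/
import Mathlib

section
/- If g is an isometry of a nondegenerate integral lattice L of prime order p, then p - 1 divides the rank of the coinvariant sublattice L_g = (L^g)^⊥. -/
/-!
The norm `N = ∑_{i < p} gⁱ` of the cyclic group generated by `g` maps `L` into `L^g` and is
self-adjoint, while `b(x, N y) = p • b(x, y)` for invariant `x`; as `p` is not a zero divisor this
identifies `L_g` with `ker N`. On `ker N` the isometry `g` satisfies `1 + g + ⋯ + g^{p-1} = 0`,
that is `Φ_p(g) = 0`, so `ℚ ⊗ ker N` is a vector space over the field `ℚ[X]/(Φ_p) ≅ ℚ(ζ_p)`,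
whose degree over `ℚ` is `p - 1`.
-/

open Polynomial Finset LinearMap

theorem Polynomial.Irreducible.natDegree_dvd_finrank_of_aeval_eq_zero {K V : Type*} [Field K]
    [AddCommGroup V] [Module K V] {P : K[X]} (hP : Irreducible P) {f : Module.End K V}
    (hf : aeval f P = 0) : P.natDegree ∣ Module.finrank K V := by
  have htors : Module.IsTorsionBySet K[X] (Module.AEval' f) (Ideal.span {P}) := by
    rw [Module.isTorsionBySet_span_singleton_iff]
    intro m
    obtain ⟨v, rfl⟩ := (Module.AEval'.of f).surjective m
    rw [← Module.AEval.of_aeval_smul, hf, zero_smul, map_zero]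
  have : Fact (Irreducible P) := ⟨hP⟩
  let : Module (AdjoinRoot P) (Module.AEval' f) := htors.module
  have : IsScalarTower K (AdjoinRoot P) (Module.AEval' f) := htors.isScalarTower
  rw [(Module.AEval'.of f).finrank_eq, ← Module.finrank_mul_finrank K (AdjoinRoot P),
    (AdjoinRoot.powerBasis hP.ne_zero).finrank, AdjoinRoot.powerBasis_dim]
  exact dvd_mul_right _ _

theorem Polynomial.Irreducible.natDegree_map_dvd_finrank_of_aeval_eq_zero {R K M : Type*}
    [CommRing R] [Field K] [Algebra R K] [FaithfulSMul R K] [AddCommGroup M] [Module R M]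
    {P : R[X]} (hP : Irreducible (P.map (algebraMap R K))) {f : Module.End R M}
    (hf : aeval f P = 0) : (P.map (algebraMap R K)).natDegree ∣ Module.finrank R M := by
  rw [← (TensorProduct.isBaseChange R M K).finrank_eq]
  apply hP.natDegree_dvd_finrank_of_aeval_eq_zero (f := f.baseChange K)
  rw [aeval_map_algebraMap]
  change aeval (Module.End.baseChangeHom R K M f) P = 0
  rw [aeval_algHom_apply, hf, map_zero]

theorem sub_one_dvd_finrank_of_geom_sum_eq_zero {M : Type*} [AddCommGroup M] [Module ℤ M]
    {p : ℕ} (hp : p.Prime) {f : Module.End ℤ M} (hf : ∑ i ∈ range p, f ^ i = 0) :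
    p - 1 ∣ Module.finrank ℤ M := by
  have : Fact p.Prime := ⟨hp⟩
  have hirr : Irreducible ((cyclotomic p ℤ).map (algebraMap ℤ ℚ)) := by
    rw [map_cyclotomic]
    exact cyclotomic.irreducible_rat hp.pos
  have hdvd := hirr.natDegree_map_dvd_finrank_of_aeval_eq_zero (f := f) <| by
    simpa only [cyclotomic_prime, map_sum, aeval_X_pow] using hf
  rwa [map_cyclotomic, natDegree_cyclotomic, Nat.totient_prime hp] at hdvd

def LinearMap.BilinForm.isometryGroup {R M : Type*} [CommRing R] [AddCommGroup M] [Module R M]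
    (b : LinearMap.BilinForm R M) : Subgroup (M ≃ₗ[R] M) where
  carrier := {g | ∀ x y, b (g x) (g y) = b x y}
  mul_mem' {g h} hg hh x y := (hg (h x) (h y)).trans (hh x y)
  one_mem' _ _ := rfl
  inv_mem' {g} hg x y := by
    rw [← hg, ← LinearEquiv.mul_apply, ← LinearEquiv.mul_apply, mul_inv_cancel]
    rfl

namespace Representation

variable {R G M : Type*} [CommRing R] [Group G] [Fintype G] [AddCommGroup M] [Module R M]
  (ρ : Representation R G M) {b : LinearMap.BilinForm R M}

theorem isAdjointPair_norm (hb : ∀ g x y, b (ρ g x) (ρ g y) = b x y) :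
    IsAdjointPair b b ρ.norm ρ.norm := fun x y => by
  have hinv (g : G) : b (ρ g x) y = b x (ρ g⁻¹ y) := by
    rw [← hb g x (ρ g⁻¹ y), ← Module.End.mul_apply, ← map_mul, mul_inv_cancel, map_one,
      Module.End.one_apply]
  simp only [norm, LinearMap.sum_apply, map_sum, hinv]
  exact Fintype.sum_equiv (Equiv.inv G) _ _ fun _ => rfl

theorem apply_norm_eq_card_smul_of_mem_invariants (hb : ∀ g x y, b (ρ g x) (ρ g y) = b x y)
    {x : M} (hx : x ∈ ρ.invariants) (y : M) : b x (ρ.norm y) = Fintype.card G • b x y := by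
  have hfix (g : G) : b x (ρ g y) = b x y := by rw [← hb g x y, hx g]
  simp [norm, map_sum, hfix]

theorem orthogonal_invariants_eq_ker_norm [IsAddTorsionFree R]
    (hb : ∀ g x y, b (ρ g x) (ρ g y) = b x y) (hsep : b.SeparatingRight) :
    b.orthogonal ρ.invariants = ker ρ.norm := by
  ext x
  rw [BilinForm.mem_orthogonal_iff, mem_ker]
  constructor
  · intro hx
    refine hsep _ fun y => ?_
    rw [← ρ.isAdjointPair_norm hb]
    exact hx _ fun g => ρ.self_norm_apply g y
  · intro hx y hy
    have hcard := ρ.apply_norm_eq_card_smul_of_mem_invariants hb hy x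
    rwa [hx, map_zero, eq_comm, nsmul_eq_zero_iff_right Fintype.card_ne_zero] at hcard

theorem norm_eq_sum_range_pow {γ : G} (hγ : ∀ g, g ∈ Subgroup.zpowers γ) :
    ρ.norm = ∑ i ∈ range (orderOf γ), ρ γ ^ i := by
  classical
  rw [norm, ← IsCyclic.image_range_orderOf hγ, sum_image fun i hi j hj h =>
    pow_injOn_Iio_orderOf (by simpa using hi) (by simpa using hj) h]
  simp only [map_pow]

theorem mem_ker_norm_apply (g : G) {x : M} (hx : x ∈ ker ρ.norm) : ρ g x ∈ ker ρ.norm := by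
  rwa [mem_ker, norm_self_apply]

theorem sum_range_pow_restrict_ker_norm {γ : G} (hγ : ∀ g, g ∈ Subgroup.zpowers γ) :
    ∑ i ∈ range (orderOf γ), (ρ γ).restrict (fun _ => ρ.mem_ker_norm_apply γ) ^ i = 0 := by
  ext x
  have hx : (∑ i ∈ range (orderOf γ), ρ γ ^ i) (x : M) = 0 := by
    rw [← ρ.norm_eq_sum_range_pow hγ]
    exact x.2
  simpa [LinearMap.sum_apply, Module.End.pow_restrict _] using hx

end Representation

theorem Representation.sub_one_dvd_finrank_ker_norm {G M : Type*} [Group G] [Fintype G]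
    [AddCommGroup M] [Module ℤ M] (ρ : Representation ℤ G M) {γ : G}
    (hγ : ∀ g, g ∈ Subgroup.zpowers γ) {p : ℕ} (hp : p.Prime) (hγp : orderOf γ = p) :
    p - 1 ∣ Module.finrank ℤ (ker ρ.norm) := by
  -- `Module.finrank ℤ` of a submodule elaborates with `AddCommGroup.toIntModule`.
  rw [Subsingleton.elim (AddCommGroup.toIntModule _) (ker ρ.norm).module]
  exact @sub_one_dvd_finrank_of_geom_sum_eq_zero _ _ (ker ρ.norm).module p hp _
    (hγp ▸ ρ.sum_range_pow_restrict_ker_norm hγ)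

theorem stmt_0_general {L : Type} [AddCommGroup L] [Module ℤ L]
    (b : LinearMap.BilinForm ℤ L) (hnd : b.Nondegenerate)
    (g : L ≃ₗ[ℤ] L) (hiso : ∀ x y, b (g x) (g y) = b x y)
    (p : ℕ) (hp : p.Prime) (hord : orderOf g = p) :
    (p - 1) ∣ Module.finrank ℤ
      (b.orthogonal (LinearMap.eqLocus (g : L →ₗ[ℤ] L) (LinearMap.id : L →ₗ[ℤ] L))) := by
  let H := Subgroup.zpowers g
  have : Fintype H := (finite_zpowers.2 (orderOf_pos_iff.1 (hord ▸ hp.pos))).fintype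
  let ρ : Representation ℤ H L :=
    LinearEquiv.automorphismGroup.toLinearMapMonoidHom.comp H.subtype
  let γ : H := ⟨g, Subgroup.mem_zpowers g⟩
  have hγ : ∀ h : H, h ∈ Subgroup.zpowers γ := by
    rintro ⟨_, k, rfl⟩
    exact ⟨k, Subtype.ext (by simp [γ])⟩
  have hρ : ∀ h x y, b (ρ h x) (ρ h y) = b x y :=
    fun h => Subgroup.zpowers_le.2 (show g ∈ b.isometryGroup from hiso) h.2
  have hinvariants : LinearMap.eqLocus (g : L →ₗ[ℤ] L) LinearMap.id = ρ.invariants := by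
    ext x
    exact (ρ.mem_invariants_iff_of_forall_mem_zpowers γ hγ x).symm
  rw [hinvariants, ρ.orthogonal_invariants_eq_ker_norm hρ hnd.2]
  exact ρ.sub_one_dvd_finrank_ker_norm hγ hp (by rw [Subgroup.orderOf_mk, hord])

/-- If `g` is an isometry of a nondegenerate integral lattice `L` of prime
order `p`, then `p - 1` divides the rank of the coinvariant sublattice
`L_g = (L^g)^⊥`. -/
theorem stmt_0 {L : Type} [AddCommGroup L] [Module ℤ L]
    [Module.Free ℤ L] [Module.Finite ℤ L]
    (b : LinearMap.BilinForm ℤ L) (hnd : b.Nondegenerate)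
    (hsym : ∀ x y, b x y = b y x)
    (g : L ≃ₗ[ℤ] L) (hiso : ∀ x y, b (g x) (g y) = b x y)
    (p : ℕ) (hp : p.Prime) (hord : orderOf g = p) :
    (p - 1) ∣ Module.finrank ℤ
      (b.orthogonal (LinearMap.eqLocus (g : L →ₗ[ℤ] L) (LinearMap.id : L →ₗ[ℤ] L))) :=
  stmt_0_general b hnd g hiso p hp hord
end

section
/- Let M ↪ L be a primitive embedding of nondegenerate even lattices defined by a gluing subgroup H ⊆ M^♯. For each v ∈ M, the divisibility of v in L equals max{d ∈ ℕ : the class of v/d lies in H^⊥ ⊆ M^♯}. -/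
open scoped TensorProduct

/-!
Since `p x` differs from `x` by a vector orthogonal to `M ⊗ ℚ`, the rational pairing of
`v ∈ M` with `p x` is the integer `v · x`. Hence `v/d` pairs integrally with all of `p(L)`
exactly when `d` divides every `v · x`, i.e. when `d ∣ (v, L)`, and the largest such `d` is
`(v, L)`. (The value `d = 0` always qualifies because `0⁻¹ = 0` in `ℚ`; when `(v, L) = 0` the
set is all of `ℕ`, whose `sSup` is `0` by convention.)
-/

noncomputable def ratMap (L : Type) [AddCommGroup L] [Module ℤ L] :
    L →ₗ[ℤ] ℚ ⊗[ℤ] L :=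
  TensorProduct.mk ℤ ℚ L 1

section
variable {L : Type} [AddCommGroup L] [Module ℤ L] (b : LinearMap.BilinForm ℤ L)

theorem baseChange_ratMap_ratMap (x y : L) :
    b.baseChange ℚ (ratMap L x) (ratMap L y) = b x y := by
  change b.baseChange ℚ ((1 : ℚ) ⊗ₜ x) ((1 : ℚ) ⊗ₜ y) = _
  simp [LinearMap.BilinForm.baseChange_tmul, zsmul_eq_mul]

theorem baseChange_ratMap_eq_of_sub_orthogonal (hsym : ∀ x y, b x y = b y x) {v x : L}
    {q : ℚ ⊗[ℤ] L} (hq : b.baseChange ℚ (ratMap L x - q) (ratMap L v) = 0) :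
    b.baseChange ℚ (ratMap L v) q = b v x := by
  have hsymQ : (b.baseChange ℚ).IsSymm :=
    LinearMap.BilinForm.isSymm_iff.mpr (LinearMap.BilinForm.IsSymm.baseChange ℚ ⟨hsym⟩)
  rw [hsymQ.eq, map_sub, sub_eq_zero, baseChange_ratMap_ratMap] at hq
  exact hq.symm
end

theorem Int.exists_inv_mul_eq_intCast_iff_dvd {d : ℤ} (hd : d ≠ 0) (n : ℤ) :
    (∃ k : ℤ, (d : ℚ)⁻¹ * n = k) ↔ d ∣ n := by
  have hdq : (d : ℚ) ≠ 0 := by exact_mod_cast hd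
  constructor
  · rintro ⟨k, hk⟩
    rw [inv_mul_eq_iff_eq_mul₀ hdq] at hk
    exact ⟨k, by exact_mod_cast hk⟩
  · rintro ⟨k, rfl⟩
    exact ⟨k, by push_cast; field_simp⟩

theorem Nat.sSup_setOf_eq_zero_or_dvd (D : ℕ) : sSup {d : ℕ | d = 0 ∨ d ∣ D} = D := by
  rcases eq_or_ne D 0 with rfl | hD
  · simp only [dvd_zero, or_true, Set.ofPred_true]
    exact Nat.sSup_of_not_bddAbove not_bddAbove_univ
  · refine IsGreatest.csSup_eq ⟨Or.inr dvd_rfl, ?_⟩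
    rintro d (rfl | hd)
    exacts [Nat.zero_le D, Nat.le_of_dvd (Nat.pos_of_ne_zero hD) hd]

theorem stmt_7_general {L : Type} [AddCommGroup L] [Module ℤ L]
    (b : LinearMap.BilinForm ℤ L)
    (hsym : ∀ x y, b x y = b y x)
    (M : Submodule ℤ L)
    -- `p` is the orthogonal projection of `L` into `M ⊗ ℚ`
    (p : L → ℚ ⊗[ℤ] L)
    (hp2 : ∀ x : L, ∀ y ∈ M, (b.baseChange ℚ) (ratMap L x - p x) (ratMap L y) = 0)
    (v : L) (hv : v ∈ M)
    -- `D` is the divisibility `(v, L) = gcd {v·w : w ∈ L}`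
    (D : ℕ) (hD : ∀ d : ℤ, (∀ w : L, d ∣ b v w) ↔ d ∣ (D : ℤ)) :
    D = sSup {d : ℕ |
      ∀ x : L, ∃ k : ℤ, (b.baseChange ℚ) ((d : ℚ)⁻¹ • ratMap L v) (p x) = (k : ℚ)} := by
  have hpair (d : ℕ) (x : L) :
      b.baseChange ℚ ((d : ℚ)⁻¹ • ratMap L v) (p x) = (d : ℚ)⁻¹ * b v x := by
    rw [map_smul, LinearMap.smul_apply, smul_eq_mul,
      baseChange_ratMap_eq_of_sub_orthogonal b hsym (hp2 x v hv)]
  have hset : {d : ℕ | ∀ x : L, ∃ k : ℤ,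
      b.baseChange ℚ ((d : ℚ)⁻¹ • ratMap L v) (p x) = (k : ℚ)} = {d | d = 0 ∨ d ∣ D} := by
    ext d
    simp only [Set.mem_ofPred_eq, hpair]
    rcases eq_or_ne d 0 with rfl | hd
    · exact iff_of_true (fun _ => ⟨0, by simp⟩) (Or.inl rfl)
    · have hdℤ : (d : ℤ) ≠ 0 := by exact_mod_cast hd
      simp only [hd, false_or, ← Int.natCast_dvd_natCast, ← hD]
      exact forall_congr' fun x => mod_cast Int.exists_inv_mul_eq_intCast_iff_dvd hdℤ (b v x)
  rw [hset, Nat.sSup_setOf_eq_zero_or_dvd]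

/-- for a primitive embedding of even lattices `M ↪ L` with gluing
subgroup `H ⊆ M^♯` (here `H` is realized intrinsically as the image of `L` under the
orthogonal projection `p` to `M ⊗ ℚ`, modulo `M`), the divisibility `(v, L)` of
`v ∈ M` equals `max {d ∈ ℕ : v/d ∈ H^⊥}`, where `v/d ∈ H^⊥` means that `v/d` pairs
integrally with every element of `H`. -/
theorem stmt_7 {L : Type} [AddCommGroup L] [Module ℤ L]
    [Module.Free ℤ L] [Module.Finite ℤ L]
    (b : LinearMap.BilinForm ℤ L) (hnd : b.Nondegenerate)
    (hsym : ∀ x y, b x y = b y x)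
    (heven : ∀ x : L, ∃ k : ℤ, b x x = 2 * k)
    (M : Submodule ℤ L)
    (hprim : ∀ (x : L) (n : ℤ), n ≠ 0 → n • x ∈ M → x ∈ M)
    (hMnd : ∀ v ∈ M, (∀ w ∈ M, b v w = 0) → v = 0)
    -- `p` is the orthogonal projection of `L` into `M ⊗ ℚ`
    (p : L → ℚ ⊗[ℤ] L)
    (hp1 : ∀ x : L, p x ∈ Submodule.span ℚ (ratMap L '' (M : Set L)))
    (hp2 : ∀ x : L, ∀ y ∈ M, (b.baseChange ℚ) (ratMap L x - p x) (ratMap L y) = 0)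
    (v : L) (hv : v ∈ M)
    -- `D` is the divisibility `(v, L) = gcd {v·w : w ∈ L}`
    (D : ℕ) (hD : ∀ d : ℤ, (∀ w : L, d ∣ b v w) ↔ d ∣ (D : ℤ)) :
    D = sSup {d : ℕ |
      ∀ x : L, ∃ k : ℤ, (b.baseChange ℚ) ((d : ℚ)⁻¹ • ratMap L v) (p x) = (k : ℚ)} :=
  stmt_7_general b hsym M p hp2 v hv D hD
end
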